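/- arXiv:2007.06777 — 6 statements merged into one kernel-verified Lean document; each statement's English description precedes it below -/
import Mathlib

section
/- Let h be a positive divisor of 24, let m and N be positive integers with m·h² | N, and let k ∈ ℤ. Then for every γ = [[a,b],[c,d]] ∈ Γ_0(N), the conjugate σγσ^{-1} of γ by σ = [[mh, k],[0, h]] lies in SL(2,ℤ); explicitly, the numbers a + kc/(mh), k(d−a)/h + bm − k²c/(mh²), c/m, and d − kc/(mh) are all integers, and the matrix formed by them has determinant 1. -/
open Matrix


lemma sq_one_24 : ∀ x y : ZMod 24, x * y = 1 → x ^ 2 = 1 := by decide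
lemma sq_one_12 : ∀ x y : ZMod 12, x * y = 1 → x ^ 2 = 1 := by decide
lemma sq_one_8 : ∀ x y : ZMod 8, x * y = 1 → x ^ 2 = 1 := by decide
lemma sq_one_6 : ∀ x y : ZMod 6, x * y = 1 → x ^ 2 = 1 := by decide
lemma sq_one_4 : ∀ x y : ZMod 4, x * y = 1 → x ^ 2 = 1 := by decide
lemma sq_one_3 : ∀ x y : ZMod 3, x * y = 1 → x ^ 2 = 1 := by decide
lemma sq_one_2 : ∀ x y : ZMod 2, x * y = 1 → x ^ 2 = 1 := by decide
lemma sq_one_1 : ∀ x y : ZMod 1, x * y = 1 → x ^ 2 = 1 := by decide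

lemma key_sq (h : ℕ) (hh : h ∣ 24) (a d : ℤ) (h1 : (h : ℤ) ∣ a * d - 1) :
    (h : ℤ) ∣ a ^ 2 - 1 := by
  have hmem : h ∈ Nat.divisors 24 := Nat.mem_divisors.2 ⟨hh, by norm_num⟩
  have step : ∀ n : ℕ, (∀ x y : ZMod n, x * y = 1 → x ^ 2 = 1) →
      (n : ℤ) ∣ a * d - 1 → (n : ℤ) ∣ a ^ 2 - 1 := by
    intro n hn h1
    rw [← ZMod.intCast_zmod_eq_zero_iff_dvd] at h1 ⊢
    push_cast at h1 ⊢
    rw [sub_eq_zero] at h1 ⊢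
    exact hn _ _ h1
  fin_cases hmem
  · exact step 1 sq_one_1 h1
  · exact step 2 sq_one_2 h1
  · exact step 3 sq_one_3 h1
  · exact step 4 sq_one_4 h1
  · exact step 6 sq_one_6 h1
  · exact step 8 sq_one_8 h1
  · exact step 12 sq_one_12 h1
  · exact step 24 sq_one_24 h1

/-- Lemma: if `h ∣ 24`, `m·h² ∣ N` and `γ = [[a,b],[c,d]] ∈ Γ₀(N)` (i.e. `ad − bc = 1`,
`N ∣ c`), then `σγσ⁻¹ ∈ SL(2,ℤ)` for `σ = [[mh, k],[0, h]]`: the four entries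
`a + kc/(mh)`, `k(d−a)/h + bm − k²c/(mh²)`, `c/m`, `d − kc/(mh)` are integers and the
matrix they form has determinant `1`, and (computing over `ℚ`) it equals `σγσ⁻¹`. -/
theorem sigma_conj_mem_SL2
    (h m N : ℕ) (hh24 : h ∣ 24) (hhpos : 0 < h) (hmpos : 0 < m) (hNpos : 0 < N)
    (hdvd : m * h ^ 2 ∣ N) (k : ℤ)
    (a b c d : ℤ) (hdet : a * d - b * c = 1) (hc : (N : ℤ) ∣ c) :
    (((m : ℤ) * h) ∣ k * c) ∧
    ((h : ℤ) ∣ k * (d - a)) ∧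
    (((m : ℤ) * h ^ 2) ∣ k ^ 2 * c) ∧
    ((m : ℤ) ∣ c) ∧
    ((a + k * c / ((m : ℤ) * h)) * (d - k * c / ((m : ℤ) * h)) -
      (k * (d - a) / (h : ℤ) + b * m - k ^ 2 * c / ((m : ℤ) * h ^ 2)) * (c / (m : ℤ)) = 1) ∧
    (!![(m : ℚ) * h, (k : ℚ); 0, (h : ℚ)] * !![(a : ℚ), (b : ℚ); (c : ℚ), (d : ℚ)] *
        (!![(m : ℚ) * h, (k : ℚ); 0, (h : ℚ)])⁻¹ =
      !![((a + k * c / ((m : ℤ) * h) : ℤ) : ℚ),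
         ((k * (d - a) / (h : ℤ) + b * m - k ^ 2 * c / ((m : ℤ) * h ^ 2) : ℤ) : ℚ);
         ((c / (m : ℤ) : ℤ) : ℚ),
         ((d - k * c / ((m : ℤ) * h) : ℤ) : ℚ)]) := by
  have hm0 : (m : ℤ) ≠ 0 := by exact_mod_cast hmpos.ne'
  have hh0 : (h : ℤ) ≠ 0 := by exact_mod_cast hhpos.ne'
  have hmh2c : ((m : ℤ) * h ^ 2) ∣ c := by
    refine dvd_trans ?_ hc
    exact_mod_cast Int.natCast_dvd_natCast.2 hdvd
  obtain ⟨c', hc'⟩ := hmh2c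
  have hhc : (h : ℤ) ∣ c := ⟨(m : ℤ) * h * c', by rw [hc']; ring⟩
  have hsq : (h : ℤ) ∣ a ^ 2 - 1 :=
    key_sq h hh24 a d ⟨b * ((m : ℤ) * h * c'), by linear_combination hdet + b * hc'⟩
  have hda : (h : ℤ) ∣ d - a := by
    have hrw : d - a = -(d * (a ^ 2 - 1)) + a * b * c := by linear_combination a * hdet
    rw [hrw]
    exact dvd_add (dvd_neg.mpr (hsq.mul_left d)) (hhc.mul_left (a * b))
  obtain ⟨e, he⟩ := hda
  -- the division rewrites
  have hq1 : k * c / ((m : ℤ) * h) = k * h * c' := by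
    have hx : k * c = (m : ℤ) * h * (k * h * c') := by rw [hc']; ring
    rw [hx, Int.mul_ediv_cancel_left _ (mul_ne_zero hm0 hh0)]
  have hq2 : k * (d - a) / (h : ℤ) = k * e := by
    have hx : k * (d - a) = (h : ℤ) * (k * e) := by rw [he]; ring
    rw [hx, Int.mul_ediv_cancel_left _ hh0]
  have hq3 : k ^ 2 * c / ((m : ℤ) * h ^ 2) = k ^ 2 * c' := by
    have hx : k ^ 2 * c = (m : ℤ) * h ^ 2 * (k ^ 2 * c') := by rw [hc']; ring
    rw [hx, Int.mul_ediv_cancel_left _ (mul_ne_zero hm0 (pow_ne_zero 2 hh0))]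
  have hq4 : c / (m : ℤ) = (h : ℤ) ^ 2 * c' := by
    have hx : c = (m : ℤ) * ((h : ℤ) ^ 2 * c') := by rw [hc']; ring
    rw [hx, Int.mul_ediv_cancel_left _ hm0]
  refine ⟨⟨k * h * c', by rw [hc']; ring⟩, ⟨k * e, by rw [he]; ring⟩,
    ⟨k ^ 2 * c', by rw [hc']; ring⟩, ⟨(h : ℤ) ^ 2 * c', by rw [hc']; ring⟩, ?_, ?_⟩
  · rw [hq1, hq2, hq3, hq4]
    linear_combination hdet + ((k : ℤ) * h * c') * he + b * hc'
  · rw [hq1, hq2, hq3, hq4]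
    have hcQ : (c : ℚ) = (m : ℚ) * (h : ℚ) ^ 2 * (c' : ℚ) := by exact_mod_cast congrArg (Int.cast : ℤ → ℚ) hc'
    have heQ : (d : ℚ) - a = (h : ℚ) * e := by exact_mod_cast congrArg (Int.cast : ℤ → ℚ) he
    have hmQ : (m : ℚ) ≠ 0 := by exact_mod_cast hm0
    have hhQ : (h : ℚ) ≠ 0 := by exact_mod_cast hh0
    have hσ : IsUnit (!![(m : ℚ) * h, (k : ℚ); 0, (h : ℚ)]).det := by
      rw [Matrix.det_fin_two_of]
      refine isUnit_iff_ne_zero.2 ?_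
      rw [mul_zero, sub_zero]
      exact mul_ne_zero (mul_ne_zero hmQ hhQ) hhQ
    haveI := Matrix.invertibleOfIsUnitDet _ hσ
    rw [Matrix.mul_inv_eq_iff_eq_mul_of_invertible]
    ext i j
    fin_cases i <;> fin_cases j <;>
      simp [Matrix.mul_apply, Fin.sum_univ_two] <;> push_cast <;>
      first
        | linear_combination (k : ℚ) * hcQ
        | linear_combination (k : ℚ) * heQ
        | linear_combination (h : ℚ) * hcQ
        | ring
end

section
/- Let N be a positive integer and let G be the subgroup of Γ_0(N) generated by [[1,1],[0,1]] and [[1,0],[N,1]]. Then every right coset of G in Γ_0(N) contains an element [[a,b],[c,d]] whose lower-left entry c is divisible by 24N. -/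
/-- The matrix `[[1,1],[0,1]]` as an element of `SL(2,ℤ)`. -/
def Tmat : Matrix.SpecialLinearGroup (Fin 2) ℤ :=
  ⟨!![1, 1; 0, 1], by norm_num [Matrix.det_fin_two_of]⟩

/-- The matrix `[[1,0],[N,1]]` as an element of `SL(2,ℤ)`. -/
def Lmat (N : ℕ) : Matrix.SpecialLinearGroup (Fin 2) ℤ :=
  ⟨!![1, 0; (N : ℤ), 1], by norm_num [Matrix.det_fin_two_of]⟩

lemma Tpow (k : ℕ) : ((Tmat ^ k : Matrix.SpecialLinearGroup (Fin 2) ℤ) :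
    Matrix (Fin 2) (Fin 2) ℤ) = !![1, (k : ℤ); 0, 1] := by
  induction k with
  | zero => simp [Matrix.one_fin_two]
  | succ n ih =>
      rw [pow_succ, Matrix.SpecialLinearGroup.coe_mul, ih]
      show _ * (Tmat : Matrix (Fin 2) (Fin 2) ℤ) = _
      rw [Tmat]
      norm_num [Matrix.mul_fin_two]
      ring_nf

lemma Lpow (N m : ℕ) : ((Lmat N ^ m : Matrix.SpecialLinearGroup (Fin 2) ℤ) :
    Matrix (Fin 2) (Fin 2) ℤ) = !![1, 0; (m : ℤ) * N, 1] := by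
  induction m with
  | zero => simp [Matrix.one_fin_two]
  | succ n ih =>
      rw [pow_succ, Matrix.SpecialLinearGroup.coe_mul, ih]
      show _ * (Lmat N : Matrix (Fin 2) (Fin 2) ℤ) = _
      rw [Lmat]
      norm_num [Matrix.mul_fin_two]
      ring

/-- Lemma 2.5: every right coset of the subgroup `G = ⟨[[1,1],[0,1]], [[1,0],[N,1]]⟩`
in `Γ₀(N)` contains an element whose lower-left entry is divisible by `24N`. -/
theorem coset_contains_divisible_entry (N : ℕ) (hN : 0 < N) :
    ∀ γ ∈ CongruenceSubgroup.Gamma0 N,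
      ∃ σ ∈ Subgroup.closure {Tmat, Lmat N},
        ((24 * N : ℕ) : ℤ) ∣ ((σ * γ : Matrix.SpecialLinearGroup (Fin 2) ℤ) :
          Matrix (Fin 2) (Fin 2) ℤ) 1 0 := by
  intro γ hγ
  set a : ℤ := (γ : Matrix (Fin 2) (Fin 2) ℤ) 0 0 with ha
  set b : ℤ := (γ : Matrix (Fin 2) (Fin 2) ℤ) 0 1 with hb
  set c : ℤ := (γ : Matrix (Fin 2) (Fin 2) ℤ) 1 0 with hc
  set d : ℤ := (γ : Matrix (Fin 2) (Fin 2) ℤ) 1 1 with hd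
  have hdet : a * d - b * c = 1 := by
    have := γ.property
    rwa [Matrix.det_fin_two] at this
  have hcop : IsCoprime a c := ⟨d, -b, by linarith⟩
  have hNc : (N : ℤ) ∣ c := by
    have := CongruenceSubgroup.Gamma0_mem.mp hγ
    exact (ZMod.intCast_zmod_eq_zero_iff_dvd _ N).mp this
  obtain ⟨c₁, hc₁⟩ := hNc
  -- find k with a + k*c coprime to 2 and 3
  have hnotunit2 : ¬ IsUnit (2 : ℤ) := by norm_num [Int.isUnit_iff]
  have hnotunit3 : ¬ IsUnit (3 : ℤ) := by norm_num [Int.isUnit_iff]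
  obtain ⟨k, hk2, hk3⟩ : ∃ k : ℕ, ¬ (2 : ℤ) ∣ (a + (k : ℤ) * c) ∧
      ¬ (3 : ℤ) ∣ (a + (k : ℤ) * c) := by
    by_cases h2 : (2 : ℤ) ∣ a <;> by_cases h3 : (3 : ℤ) ∣ a
    · have h2c : ¬ (2 : ℤ) ∣ c := fun h => hnotunit2 (hcop.isUnit_of_dvd' h2 h)
      have h3c : ¬ (3 : ℤ) ∣ c := fun h => hnotunit3 (hcop.isUnit_of_dvd' h3 h)
      exact ⟨1, by push_cast; constructor <;> omega⟩
    · have h2c : ¬ (2 : ℤ) ∣ c := fun h => hnotunit2 (hcop.isUnit_of_dvd' h2 h)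
      exact ⟨3, by push_cast; constructor <;> omega⟩
    · have h3c : ¬ (3 : ℤ) ∣ c := fun h => hnotunit3 (hcop.isUnit_of_dvd' h3 h)
      exact ⟨2, by push_cast; constructor <;> omega⟩
    · exact ⟨0, by push_cast; constructor <;> omega⟩
  -- a + k*c is coprime to 24
  have hcop24 : IsCoprime (a + (k : ℤ) * c) 24 := by
    have h2 : IsCoprime (a + (k : ℤ) * c) 2 :=
      ((Int.prime_two.coprime_iff_not_dvd).mpr hk2).symm
    have h3 : IsCoprime (a + (k : ℤ) * c) 3 :=
      ((Int.prime_three.coprime_iff_not_dvd).mpr hk3).symm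
    have h24 : (24 : ℤ) = 2 ^ 3 * 3 := by norm_num
    rw [h24]
    exact (h2.pow_right).mul_right h3
  -- hence a unit mod 24
  have hunit : IsUnit (((a + (k : ℤ) * c : ℤ) : ZMod 24)) := by
    have h := hcop24.map (Int.castRingHom (ZMod 24))
    have h0 : (Int.castRingHom (ZMod 24)) (24 : ℤ) = 0 := by decide
    rw [h0] at h
    exact isCoprime_zero_right.mp h
  obtain ⟨u, hu⟩ := hunit.exists_right_inv
  set m : ZMod 24 := -((c₁ : ℤ) : ZMod 24) * u with hm
  refine ⟨Lmat N ^ m.val * Tmat ^ k, ?_, ?_⟩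
  · exact Subgroup.mul_mem _
      (Subgroup.pow_mem _ (Subgroup.subset_closure (by simp)) _)
      (Subgroup.pow_mem _ (Subgroup.subset_closure (by simp)) _)
  · have hentry : ((Lmat N ^ m.val * Tmat ^ k * γ : Matrix.SpecialLinearGroup (Fin 2) ℤ) :
        Matrix (Fin 2) (Fin 2) ℤ) 1 0 = (m.val : ℤ) * N * (a + (k : ℤ) * c) + c := by
      rw [Matrix.SpecialLinearGroup.coe_mul, Matrix.SpecialLinearGroup.coe_mul, Tpow, Lpow]
      simp [Matrix.mul_apply, Fin.sum_univ_two, ← ha, ← hc]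
      ring
    rw [hentry]
    have heq : (m.val : ℤ) * N * (a + (k : ℤ) * c) + c =
        (N : ℤ) * ((m.val : ℤ) * (a + (k : ℤ) * c) + c₁) := by rw [hc₁]; ring
    have h24N : ((24 * N : ℕ) : ℤ) = (N : ℤ) * 24 := by push_cast; ring
    rw [heq, h24N]
    refine mul_dvd_mul_left _ ?_
    have : (((m.val : ℤ) * (a + (k : ℤ) * c) + c₁ : ℤ) : ZMod 24) = 0 := by
      push_cast
      rw [ZMod.natCast_val, ZMod.cast_id, hm]
      push_cast at hu
      linear_combination (-((c₁ : ℤ) : ZMod 24)) * hu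
    exact (ZMod.intCast_zmod_eq_zero_iff_dvd _ 24).mp this
end

section
/- For every τ in the complex upper half-plane, η(τ + 1/2) = e^{2πi/48} · η(2τ)³ / (η(τ)·η(4τ)). -/
/-!
Write `q = e^{2πiτ}` and `(c; q)_∞ = ∏_{k ≥ 0} (1 - c q^k)`, so that `η(τ) = q^{1/24} (q; q)_∞`.
Shifting `τ` by `1/2` replaces `q` by `-q`, and the theorem becomes the product identity
`(-q; -q)_∞ (q; q)_∞ (q⁴; q⁴)_∞ = (q²; q²)_∞³`. It follows from splitting each product into its
even- and odd-indexed factors, `(c; q)_∞ = (c; q²)_∞ (cq; q²)_∞`, together with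
`(c; q)_∞ (-c; q)_∞ = (c²; q²)_∞`.
-/

/-- The Dedekind eta function `η(τ) = e^{2πiτ/24} ∏_{ℓ≥1} (1 − e^{2πiℓτ})`. -/
noncomputable def dedekindEta (τ : ℂ) : ℂ :=
  Complex.exp (2 * Real.pi * Complex.I * τ / 24) *
    ∏' ℓ : ℕ, (1 - Complex.exp (2 * Real.pi * Complex.I * (ℓ + 1) * τ))

open Complex

noncomputable def qPochhammer (c q : ℂ) : ℂ := ∏' k : ℕ, (1 - c * q ^ k)

section qPochhammer

variable {c q : ℂ}

lemma summable_norm_mul_pow (c : ℂ) (hq : ‖q‖ < 1) : Summable fun k : ℕ => ‖c * q ^ k‖ := by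
  simpa only [norm_mul, norm_pow] using
    (summable_geometric_of_lt_one (norm_nonneg q) hq).mul_left ‖c‖

lemma multipliable_one_sub_mul_pow (c : ℂ) (hq : ‖q‖ < 1) :
    Multipliable fun k : ℕ => 1 - c * q ^ k := by
  simpa only [sub_eq_add_neg] using
    multipliable_one_add_of_summable (f := fun k => -(c * q ^ k))
      (by simpa only [norm_neg] using summable_norm_mul_pow c hq)

lemma qPochhammer_ne_zero (hc : ‖c‖ < 1) (hq : ‖q‖ < 1) : qPochhammer c q ≠ 0 := by
  have hfactor (k : ℕ) : 1 + -(c * q ^ k) ≠ 0 := by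
    rw [← sub_eq_add_neg, sub_ne_zero]
    refine fun h => (lt_irrefl (1 : ℝ)) ?_
    calc (1 : ℝ) = ‖c * q ^ k‖ := by rw [← h, norm_one]
      _ = ‖c‖ * ‖q‖ ^ k := by rw [norm_mul, norm_pow]
      _ ≤ ‖c‖ := mul_le_of_le_one_right (norm_nonneg c) (pow_le_one₀ (norm_nonneg q) hq.le)
      _ < 1 := hc
  simpa only [qPochhammer, sub_eq_add_neg] using
    tprod_one_add_ne_zero_of_summable hfactor
      (by simpa only [norm_neg] using summable_norm_mul_pow c hq)

lemma qPochhammer_eq_mul_sq (c : ℂ) (hq : ‖q‖ < 1) :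
    qPochhammer c q = qPochhammer c (q ^ 2) * qPochhammer (c * q) (q ^ 2) := by
  have hq2 : ‖q ^ 2‖ < 1 := by
    rw [norm_pow]; exact pow_lt_one₀ (norm_nonneg q) hq two_ne_zero
  have heven (k : ℕ) : 1 - c * (q ^ 2) ^ k = 1 - c * q ^ (2 * k) := by rw [pow_mul]
  have hodd (k : ℕ) : 1 - c * q * (q ^ 2) ^ k = 1 - c * q ^ (2 * k + 1) := by ring
  rw [qPochhammer, ← tprod_even_mul_odd (f := fun k => 1 - c * q ^ k)
    ((multipliable_one_sub_mul_pow c hq2).congr heven)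
    ((multipliable_one_sub_mul_pow (c * q) hq2).congr hodd)]
  simp only [qPochhammer, heven, hodd]

lemma qPochhammer_mul_qPochhammer_neg (c : ℂ) (hq : ‖q‖ < 1) :
    qPochhammer c q * qPochhammer (-c) q = qPochhammer (c ^ 2) (q ^ 2) := by
  rw [qPochhammer, qPochhammer, qPochhammer, ← (multipliable_one_sub_mul_pow c hq).tprod_mul
    (multipliable_one_sub_mul_pow (-c) hq)]
  exact tprod_congr fun k => by ring

lemma qPochhammer_neg_mul_qPochhammer_mul_qPochhammer_pow_four (hq : ‖q‖ < 1) :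
    qPochhammer (-q) (-q) * qPochhammer q q * qPochhammer (q ^ 4) (q ^ 4) =
      qPochhammer (q ^ 2) (q ^ 2) ^ 3 := by
  have hq2 : ‖q ^ 2‖ < 1 := by
    rw [norm_pow]; exact pow_lt_one₀ (norm_nonneg q) hq two_ne_zero
  have hsplit := qPochhammer_eq_mul_sq q hq
  have hsplit_neg := qPochhammer_eq_mul_sq (-q) (q := -q) (by rwa [norm_neg])
  have hsplit_sq := qPochhammer_eq_mul_sq (q ^ 2) hq2
  have hpair := qPochhammer_mul_qPochhammer_neg q (q := q ^ 2) hq2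
  simp only [neg_sq, ← sq, ← pow_mul] at hsplit hsplit_neg hsplit_sq hpair
  rw [hsplit, hsplit_neg, hsplit_sq]
  linear_combination
    (qPochhammer (q ^ 2) (q ^ 4) ^ 2 * qPochhammer (q ^ 4) (q ^ 4) ^ 3) * hpair

end qPochhammer

lemma dedekindEta_eq_qPochhammer (τ : ℂ) :
    dedekindEta τ = exp (2 * Real.pi * I * τ / 24) *
      qPochhammer (exp (2 * Real.pi * I * τ)) (exp (2 * Real.pi * I * τ)) := by
  rw [dedekindEta, qPochhammer]
  congr 1
  refine tprod_congr fun ℓ => ?_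
  rw [← pow_succ', ← exp_nat_mul]
  push_cast
  ring_nf

lemma dedekindEta_natCast_mul (n : ℕ) (τ : ℂ) :
    dedekindEta (n * τ) = exp (2 * Real.pi * I * τ / 24) ^ n *
      qPochhammer (exp (2 * Real.pi * I * τ) ^ n) (exp (2 * Real.pi * I * τ) ^ n) := by
  simp only [dedekindEta_eq_qPochhammer, ← exp_nat_mul]
  ring_nf

lemma dedekindEta_add_half_eq (τ : ℂ) :
    dedekindEta (τ + 1 / 2) = exp (2 * Real.pi * I / 48) * exp (2 * Real.pi * I * τ / 24) *
      qPochhammer (-exp (2 * Real.pi * I * τ)) (-exp (2 * Real.pi * I * τ)) := by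
  have hnome : exp (2 * Real.pi * I * (τ + 1 / 2)) = -exp (2 * Real.pi * I * τ) := by
    rw [mul_add, exp_add, show 2 * (Real.pi : ℂ) * I * (1 / 2) = Real.pi * I by ring,
      exp_pi_mul_I, mul_neg_one]
  rw [dedekindEta_eq_qPochhammer, hnome, ← exp_add]
  ring_nf

/-- `η(τ + 1/2) = e^{2πi/48} · η(2τ)³ / (η(τ)·η(4τ))`. -/
theorem dedekindEta_add_half (τ : ℂ) (hτ : 0 < τ.im) :
    dedekindEta (τ + 1 / 2) =
      Complex.exp (2 * Real.pi * Complex.I / 48) * dedekindEta (2 * τ) ^ 3 /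
        (dedekindEta τ * dedekindEta (4 * τ)) := by
  have h2 := dedekindEta_natCast_mul 2 τ
  have h4 := dedekindEta_natCast_mul 4 τ
  push_cast at h2 h4
  rw [dedekindEta_add_half_eq, h2, h4, dedekindEta_eq_qPochhammer]
  set q := exp (2 * Real.pi * I * τ)
  set e := exp (2 * Real.pi * I * τ / 24)
  have hq : ‖q‖ < 1 := UpperHalfPlane.norm_exp_two_pi_I_lt_one ⟨τ, hτ⟩
  have hq4 : ‖q ^ 4‖ < 1 := by
    rw [norm_pow]; exact pow_lt_one₀ (norm_nonneg q) hq (by norm_num)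
  have hη : qPochhammer q q ≠ 0 := qPochhammer_ne_zero hq hq
  have hη4 : qPochhammer (q ^ 4) (q ^ 4) ≠ 0 := qPochhammer_ne_zero hq4 hq4
  have he : e ≠ 0 := exp_ne_zero _
  field_simp
  linear_combination qPochhammer_neg_mul_qPochhammer_mul_qPochhammer_pow_four hq
end

section
/- For every τ in the complex upper half-plane, η(τ + 1/3)·η(τ + 2/3) = e^{2πi/24} · η(3τ)⁴ / (η(τ)·η(9τ)). -/
open Complex
open scoped Real

theorem Multipliable.tprod_eq_prod_tprod_mul_add {M : Type*} [CommMonoid M] [TopologicalSpace M]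
    [ContinuousMul M] [T3Space M] (d : ℕ) [NeZero d] {f : ℕ → M} (hf : Multipliable f)
    (hres : ∀ i : Fin d, Multipliable fun m ↦ f (d * m + i)) :
    ∏' n, f n = ∏ i : Fin d, ∏' m, f (d * m + i) := by
  let e : Fin d × ℕ ≃ ℕ := (Equiv.prodComm _ _).trans (Nat.divModEquiv d).symm
  have he : ∀ p, e p = d * p.2 + p.1 := fun p ↦ by simp [e, mul_comm]
  calc ∏' n, f n = ∏' p, f (e p) := (e.tprod_eq f).symm
    _ = ∏' (i) (m), f (e (i, m)) :=
        (e.multipliable_iff.mpr hf).tprod_prod' fun i ↦ by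
          simpa only [Function.comp_apply, he] using hres i
    _ = ∏ i : Fin d, ∏' m, f (d * m + i) := by simp only [tprod_fintype, he]

lemma IsPrimitiveRoot.one_sub_mul_one_sub_mul_one_sub {R : Type*} [CommRing R] [IsDomain R]
    {ζ : R} (hζ : IsPrimitiveRoot ζ 3) (y : R) :
    (1 - y) * (1 - ζ * y) * (1 - ζ ^ 2 * y) = 1 - y ^ 3 := by
  have hsum : 1 + ζ + ζ ^ 2 = 0 := by
    simpa [Finset.sum_range_succ, add_assoc] using hζ.geom_sum_eq_zero (by norm_num)
  linear_combination (y ^ 2 - y) * hsum + (y ^ 2 - y ^ 3) * hζ.pow_eq_one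

lemma multipliable_one_sub_pow_mul_add {x : ℂ} (hx : ‖x‖ < 1) {d : ℕ} (hd : 0 < d) (r : ℕ) :
    Multipliable fun m : ℕ ↦ 1 - x ^ (d * m + r) := by
  have hxd : ‖x‖ ^ d < 1 := pow_lt_one₀ (norm_nonneg x) hx hd.ne'
  simp_rw [sub_eq_add_neg]
  refine multipliable_one_add_of_summable ?_
  refine ((summable_geometric_of_lt_one (by positivity) hxd).mul_left (‖x‖ ^ r)).congr fun m ↦ ?_
  rw [norm_neg, norm_pow, pow_add, pow_mul]
  ring

lemma IsPrimitiveRoot.norm_pow_mul_lt_one {ζ : ℂ} {n : ℕ} (hζ : IsPrimitiveRoot ζ n)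
    (hn : n ≠ 0) (k : ℕ) {x : ℂ} (hx : ‖x‖ < 1) : ‖ζ ^ k * x‖ < 1 := by
  rwa [norm_mul, norm_pow, hζ.norm'_eq_one hn, one_pow, one_mul]

noncomputable def eulerPhi (x : ℂ) : ℂ := ∏' n : ℕ, (1 - x ^ (n + 1))

noncomputable def eulerPhiMod3 (r : ℕ) (x : ℂ) : ℂ := ∏' m : ℕ, (1 - x ^ (3 * m + r))

lemma eulerPhi_eq_mul_mul {x : ℂ} (hx : ‖x‖ < 1) :
    eulerPhi x = eulerPhiMod3 1 x * eulerPhiMod3 2 x * eulerPhiMod3 3 x := by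
  rw [eulerPhi, (ModularForm.multipliable_one_sub_pow hx).tprod_eq_prod_tprod_mul_add 3
    fun i ↦ multipliable_one_sub_pow_mul_add hx three_pos (i + 1)]
  simp [Fin.prod_univ_three, eulerPhiMod3, add_assoc]

lemma eulerPhiMod3_three (x : ℂ) : eulerPhiMod3 3 x = eulerPhi (x ^ 3) := by
  refine tprod_congr fun m ↦ ?_
  rw [← pow_mul]
  ring_nf

lemma eulerPhiMod3_three_mul_of_pow_eq_one {ζ : ℂ} (hζ : ζ ^ 3 = 1) (x : ℂ) :
    eulerPhiMod3 3 (ζ * x) = eulerPhiMod3 3 x := by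
  refine tprod_congr fun m ↦ ?_
  rw [mul_pow, show 3 * m + 3 = 3 * (m + 1) by ring, pow_mul, hζ, one_pow, one_mul]

lemma IsPrimitiveRoot.eulerPhiMod3_mul_mul {ζ : ℂ} (hζ : IsPrimitiveRoot ζ 3) {r : ℕ}
    (hr : r.Coprime 3) {x : ℂ} (hx : ‖x‖ < 1) :
    eulerPhiMod3 r x * eulerPhiMod3 r (ζ * x) * eulerPhiMod3 r (ζ ^ 2 * x) =
      eulerPhiMod3 r (x ^ 3) := by
  have hmul : ∀ k : ℕ, Multipliable fun m : ℕ ↦ 1 - (ζ ^ k * x) ^ (3 * m + r) := fun k ↦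
    multipliable_one_sub_pow_mul_add (hζ.norm_pow_mul_lt_one three_ne_zero k hx) three_pos r
  have h0 := hmul 0
  have h1 := hmul 1
  simp only [pow_zero, one_mul, pow_one] at h0 h1
  rw [eulerPhiMod3, eulerPhiMod3, eulerPhiMod3, ← h0.tprod_mul h1,
    ← (h0.mul h1).tprod_mul (hmul 2)]
  refine tprod_congr fun m ↦ ?_
  have hk : IsPrimitiveRoot (ζ ^ (3 * m + r)) 3 :=
    hζ.pow_of_coprime _ ((Nat.coprime_mul_left_add_left r 3 m).mpr hr)
  rw [mul_pow, mul_pow, ← pow_mul, mul_comm 2, pow_mul, hk.one_sub_mul_one_sub_mul_one_sub]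
  ring

theorem IsPrimitiveRoot.eulerPhi_mul_mul_mul_eulerPhi_pow_nine {ζ : ℂ} (hζ : IsPrimitiveRoot ζ 3)
    {x : ℂ} (hx : ‖x‖ < 1) :
    eulerPhi x * eulerPhi (ζ * x) * eulerPhi (ζ ^ 2 * x) * eulerPhi (x ^ 9) =
      eulerPhi (x ^ 3) ^ 4 := by
  have hx3 : ‖x ^ 3‖ < 1 := by rw [norm_pow]; exact pow_lt_one₀ (norm_nonneg x) hx three_ne_zero
  have hζ2 : (ζ ^ 2) ^ 3 = 1 := by rw [← pow_mul, mul_comm, pow_mul, hζ.pow_eq_one, one_pow]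
  have hx9 : x ^ 9 = (x ^ 3) ^ 3 := by ring
  calc eulerPhi x * eulerPhi (ζ * x) * eulerPhi (ζ ^ 2 * x) * eulerPhi (x ^ 9)
      = (eulerPhiMod3 1 x * eulerPhiMod3 1 (ζ * x) * eulerPhiMod3 1 (ζ ^ 2 * x)) *
          (eulerPhiMod3 2 x * eulerPhiMod3 2 (ζ * x) * eulerPhiMod3 2 (ζ ^ 2 * x)) *
          eulerPhiMod3 3 x ^ 3 * eulerPhiMod3 3 (x ^ 3) := by
        rw [eulerPhi_eq_mul_mul hx,
          eulerPhi_eq_mul_mul (by simpa using hζ.norm_pow_mul_lt_one three_ne_zero 1 hx),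
          eulerPhi_eq_mul_mul (hζ.norm_pow_mul_lt_one three_ne_zero 2 hx),
          eulerPhiMod3_three_mul_of_pow_eq_one hζ.pow_eq_one,
          eulerPhiMod3_three_mul_of_pow_eq_one hζ2, hx9, ← eulerPhiMod3_three]
        ring
    _ = eulerPhiMod3 1 (x ^ 3) * eulerPhiMod3 2 (x ^ 3) * eulerPhiMod3 3 (x ^ 3) *
          eulerPhi (x ^ 3) ^ 3 := by
        rw [hζ.eulerPhiMod3_mul_mul (by norm_num) hx, hζ.eulerPhiMod3_mul_mul (by norm_num) hx,
          eulerPhiMod3_three]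
        ring
    _ = eulerPhi (x ^ 3) ^ 4 := by rw [← eulerPhi_eq_mul_mul hx3]; ring

lemma dedekindEta_eq_cexp_mul_eulerPhi (τ : ℂ) :
    dedekindEta τ = cexp (2 * π * I * τ / 24) * eulerPhi (cexp (2 * π * I * τ)) := by
  rw [dedekindEta, eulerPhi]
  congr 1
  exact tprod_congr fun n ↦ by
    rw [← ModularForm.eta_q_eq_cexp, ModularForm.eta_q_eq_pow]

lemma dedekindEta_eq_eta : dedekindEta = ModularForm.eta := by
  ext τ
  simp only [dedekindEta, ModularForm.eta, Function.Periodic.qParam, ModularForm.eta_q_eq_cexp]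
  norm_num

lemma dedekindEta_ne_zero {τ : ℂ} (hτ : 0 < τ.im) : dedekindEta τ ≠ 0 :=
  dedekindEta_eq_eta ▸ ModularForm.eta_ne_zero hτ

/-- `η(τ + 1/3)·η(τ + 2/3) = e^{2πi/24} · η(3τ)⁴ / (η(τ)·η(9τ))`. -/
theorem dedekindEta_add_thirds (τ : ℂ) (hτ : 0 < τ.im) :
    dedekindEta (τ + 1 / 3) * dedekindEta (τ + 2 / 3) =
      Complex.exp (2 * Real.pi * Complex.I / 24) * dedekindEta (3 * τ) ^ 4 /
        (dedekindEta τ * dedekindEta (9 * τ)) := by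
  set q := cexp (2 * π * I * τ)
  set ζ := cexp (2 * π * I / 3)
  have hq : ‖q‖ < 1 := by
    simpa [q, mul_comm] using UpperHalfPlane.norm_exp_two_pi_I_lt_one ⟨τ, hτ⟩
  have hζ : IsPrimitiveRoot ζ 3 := by simpa using isPrimitiveRoot_exp 3 three_ne_zero
  have hne : dedekindEta τ * dedekindEta (9 * τ) ≠ 0 :=
    mul_ne_zero (dedekindEta_ne_zero hτ) (dedekindEta_ne_zero (by simpa using hτ))
  have hζq : cexp (2 * π * I * (τ + 1 / 3)) = ζ * q := by rw [← exp_add]; ring_nf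
  have hζ2q : cexp (2 * π * I * (τ + 2 / 3)) = ζ ^ 2 * q := by
    rw [← exp_nat_mul, ← exp_add]; push_cast; ring_nf
  have hq3 : cexp (2 * π * I * (3 * τ)) = q ^ 3 := by rw [← exp_nat_mul]; push_cast; ring_nf
  have hq9 : cexp (2 * π * I * (9 * τ)) = q ^ 9 := by rw [← exp_nat_mul]; push_cast; ring_nf
  have hpre : cexp (2 * π * I * (τ + 1 / 3) / 24) * cexp (2 * π * I * (τ + 2 / 3) / 24) *
      (cexp (2 * π * I * τ / 24) * cexp (2 * π * I * (9 * τ) / 24)) =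
      cexp (2 * π * I / 24) * cexp (2 * π * I * (3 * τ) / 24) ^ 4 := by
    simp only [← exp_add, ← exp_nat_mul]; push_cast; ring_nf
  rw [eq_div_iff hne]
  simp only [dedekindEta_eq_cexp_mul_eulerPhi, hζq, hζ2q, hq3, hq9]
  linear_combination
    (eulerPhi (ζ * q) * eulerPhi (ζ ^ 2 * q) * eulerPhi q * eulerPhi (q ^ 9)) * hpre +
    cexp (2 * π * I / 24) * cexp (2 * π * I * (3 * τ) / 24) ^ 4 *
      hζ.eulerPhi_mul_mul_mul_eulerPhi_pow_nine hq
end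

section
/- Let N = n²M where n is a positive divisor of 24 and M is a squarefree positive integer. Then the number of pairs (m,k) with m a positive divisor of N and 0 ≤ k ≤ φ(h(m))−1 equals the number of cusps of X_0(N); that is, ∑_{m|N} φ(h(m)) = ∑_{d|N} φ(gcd(d, N/d)). Moreover, both sides equal ∑_{h|n} φ(h)·2^{ω(N/h²)}, where ω(k) denotes the number of distinct prime factors of k. -/
/-!
Let `k.sqrtPart` be the largest `h` with `h² ∣ k`; then `h(m) = (N / m).sqrtPart`, and
`(n² M).sqrtPart = n` because `M` is squarefree. Read as functions of `N`, the three sums are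
multiplicative, so it suffices to compare them at `N = p ^ k`. There each one equals
`∑_{i ≤ k/2} φ(p^i)` weighted by `2`, except by `1` when `2 i = k`: both exponent maps
`j ↦ j / 2` (pairs) and `j ↦ min j (k - j)` (cusps) on `{0, …, k}` have fibres of exactly
these sizes.
-/

open Finset ArithmeticFunction
open scoped ArithmeticFunction.zeta

/-- `hh N m` is the largest positive integer `h` with `m·h² ∣ N` (for `m ∣ N`, `N > 0`). -/
def hh (N m : ℕ) : ℕ := Nat.findGreatest (fun h => m * h ^ 2 ∣ N) N

namespace Nat

noncomputable def sqrtPart (k : ℕ) : ℕ :=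
  (k.factorization.mapRange (· / 2) (Nat.zero_div 2)).prod (· ^ ·)

theorem factorization_sqrtPart (k p : ℕ) :
    k.sqrtPart.factorization p = k.factorization p / 2 := by
  rw [sqrtPart, prod_pow_factorization_eq_self, Finsupp.mapRange_apply]
  intro _ hq
  exact prime_of_mem_primeFactors (Finsupp.support_mapRange hq)

theorem sqrtPart_ne_zero (k : ℕ) : k.sqrtPart ≠ 0 :=
  Finsupp.prod_ne_zero_iff.2 fun _ hp =>
    pow_ne_zero _ (prime_of_mem_primeFactors (Finsupp.support_mapRange hp)).ne_zero

theorem dvd_sqrtPart_iff {k h : ℕ} (hk : k ≠ 0) : h ∣ k.sqrtPart ↔ h ^ 2 ∣ k := by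
  rcases eq_or_ne h 0 with rfl | hh0
  · simp [sqrtPart_ne_zero, hk]
  rw [← factorization_le_iff_dvd hh0 (sqrtPart_ne_zero k),
    ← factorization_le_iff_dvd (pow_ne_zero 2 hh0) hk, Finsupp.le_def, Finsupp.le_def]
  refine forall_congr' fun p => ?_
  rw [factorization_sqrtPart, factorization_pow, Finsupp.smul_apply, smul_eq_mul]
  omega

theorem sqrtPart_dvd {k : ℕ} (hk : k ≠ 0) : k.sqrtPart ∣ k :=
  (dvd_pow_self _ two_ne_zero).trans ((dvd_sqrtPart_iff hk).1 dvd_rfl)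

theorem Coprime.sqrtPart_mul {a b : ℕ} (hab : a.Coprime b) :
    (a * b).sqrtPart = a.sqrtPart * b.sqrtPart := by
  refine eq_of_factorization_eq (sqrtPart_ne_zero _)
    (mul_ne_zero (sqrtPart_ne_zero a) (sqrtPart_ne_zero b)) fun p => ?_
  rw [factorization_mul (sqrtPart_ne_zero a) (sqrtPart_ne_zero b), Finsupp.add_apply,
    factorization_sqrtPart, factorization_sqrtPart, factorization_sqrtPart,
    factorization_mul_apply_of_coprime hab]
  have : a.factorization p = 0 ∨ b.factorization p = 0 := by
    by_contra! h
    exact disjoint_left.1 hab.disjoint_primeFactors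
      (support_factorization a ▸ Finsupp.mem_support_iff.2 h.1)
      (support_factorization b ▸ Finsupp.mem_support_iff.2 h.2)
  omega

theorem sqrtPart_prime_pow {p : ℕ} (hp : p.Prime) (k : ℕ) : (p ^ k).sqrtPart = p ^ (k / 2) :=
  eq_of_factorization_eq (sqrtPart_ne_zero _) (pow_ne_zero _ hp.ne_zero) fun q => by
    rw [factorization_sqrtPart, hp.factorization_pow, hp.factorization_pow,
      Finsupp.single_apply, Finsupp.single_apply]
    split_ifs <;> rfl

theorem sqrtPart_sq_mul {n M : ℕ} (hn : n ≠ 0) (hM : Squarefree M) :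
    (n ^ 2 * M).sqrtPart = n :=
  eq_of_factorization_eq (sqrtPart_ne_zero _) hn fun p => by
    rw [factorization_sqrtPart, factorization_mul (pow_ne_zero 2 hn) hM.ne_zero,
      Finsupp.add_apply, factorization_pow, Finsupp.smul_apply, smul_eq_mul]
    have := hM.natFactorization_le_one p
    omega

theorem div_ne_zero_of_dvd {a b : ℕ} (ha : a ≠ 0) (hb : b ∣ a) : a / b ≠ 0 :=
  (div_ne_zero_iff_of_dvd hb).2 ⟨ha, ne_zero_of_dvd_ne_zero ha hb⟩

end Nat

theorem hh_eq_sqrtPart {N m : ℕ} (hN : N ≠ 0) (hm : m ∣ N) : hh N m = (N / m).sqrtPart := by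
  have hNm : N / m ≠ 0 := Nat.div_ne_zero_of_dvd hN hm
  have key (h : ℕ) : m * h ^ 2 ∣ N ↔ h ∣ (N / m).sqrtPart := by
    rw [Nat.dvd_sqrtPart_iff hNm, Nat.dvd_div_iff_mul_dvd hm]
  rw [hh, Nat.findGreatest_eq_iff]
  refine ⟨?_, fun _ => (key _).2 dvd_rfl, fun h hlt _ hdvd => ?_⟩
  · exact (Nat.le_of_dvd (Nat.pos_of_ne_zero hNm) (Nat.sqrtPart_dvd hNm)).trans
      (Nat.div_le_self N m)
  · exact hlt.not_ge
      (Nat.le_of_dvd (Nat.pos_of_ne_zero (Nat.sqrtPart_ne_zero _)) ((key h).1 hdvd))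

theorem Nat.Coprime.sum_divisors_mul_eq_sum_mul_sum {R : Type*} [CommSemiring R] {m n : ℕ}
    (hmn : m.Coprime n) {f g k : ℕ → R}
    (hk : ∀ a ∈ m.divisors, ∀ b ∈ n.divisors, k (a * b) = f a * g b) :
    ∑ d ∈ (m * n).divisors, k d = (∑ a ∈ m.divisors, f a) * ∑ b ∈ n.divisors, g b := by
  rw [Nat.divisors_mul, Finset.mul_def, sum_image hmn.mul_injOn_divisors, sum_product,
    sum_mul_sum]
  exact sum_congr rfl fun a ha => sum_congr rfl fun b hb => hk a ha b hb

theorem Nat.Coprime.gcd_mul_mul {a b c d : ℕ} (h : (a * c).Coprime (b * d)) :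
    (a * b).gcd (c * d) = a.gcd c * b.gcd d := by
  rw [h.of_dvd (Nat.dvd_mul_left c a) (Nat.dvd_mul_left d b) |>.gcd_mul,
    (h.of_dvd (Nat.dvd_mul_left c a) (Nat.dvd_mul_right b d)).symm.gcd_mul_right_cancel a,
    (h.of_dvd (Nat.dvd_mul_right a c) (Nat.dvd_mul_left d b)).gcd_mul_left_cancel b]

theorem sum_range_comp_of_card_fibre {k : ℕ} {f : ℕ → ℕ} (hf : ∀ j ≤ k, f j ≤ k / 2)
    (hfibre : ∀ i ≤ k / 2, #{j ∈ range (k + 1) | f j = i} = if k = 2 * i then 1 else 2)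
    (g : ℕ → ℕ) :
    ∑ j ∈ range (k + 1), g (f j) =
      ∑ i ∈ range (k / 2 + 1), g i * if k = 2 * i then 1 else 2 := by
  rw [← sum_fiberwise_of_maps_to (t := range (k / 2 + 1))
    (fun j hj => mem_range.2 (Nat.lt_succ_of_le (hf j (Nat.le_of_lt_succ (mem_range.1 hj)))))]
  refine sum_congr rfl fun i hi => ?_
  rw [sum_congr rfl fun j hj => by rw [(mem_filter.1 hj).2], sum_const,
    hfibre i (Nat.le_of_lt_succ (mem_range.1 hi)), smul_eq_mul, mul_comm]

theorem card_filter_div_two_eq {k i : ℕ} (hi : i ≤ k / 2) :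
    #{j ∈ range (k + 1) | j / 2 = i} = if k = 2 * i then 1 else 2 := by
  split_ifs with hk
  · exact card_eq_one.2 ⟨2 * i, by
      ext j; simp only [mem_filter, mem_range, mem_singleton]; omega⟩
  · exact card_eq_two.2 ⟨2 * i, 2 * i + 1, by omega, by
      ext j; simp only [mem_filter, mem_range, mem_insert, mem_singleton]; omega⟩

theorem card_filter_min_sub_eq {k i : ℕ} (hi : i ≤ k / 2) :
    #{j ∈ range (k + 1) | min j (k - j) = i} = if k = 2 * i then 1 else 2 := by
  split_ifs with hk
  · exact card_eq_one.2 ⟨i, by ext j; simp only [mem_filter, mem_range, mem_singleton]; omega⟩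
  · exact card_eq_two.2 ⟨i, k - i, by omega, by
      ext j; simp only [mem_filter, mem_range, mem_insert, mem_singleton]; omega⟩

noncomputable def totientSqrtPart : ArithmeticFunction ℕ :=
  ⟨fun k => if k = 0 then 0 else k.sqrtPart.totient, if_pos rfl⟩

theorem totientSqrtPart_apply {k : ℕ} (hk : k ≠ 0) : totientSqrtPart k = k.sqrtPart.totient :=
  if_neg hk

theorem isMultiplicative_totientSqrtPart : totientSqrtPart.IsMultiplicative := by
  refine IsMultiplicative.iff_ne_zero.2
    ⟨by simp [totientSqrtPart_apply, Nat.sqrtPart], fun {a b} ha hb hab => ?_⟩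
  rw [totientSqrtPart_apply (mul_ne_zero ha hb), totientSqrtPart_apply ha,
    totientSqrtPart_apply hb, hab.sqrtPart_mul]
  exact Nat.totient_mul (hab.of_dvd (Nat.sqrtPart_dvd ha) (Nat.sqrtPart_dvd hb))

noncomputable def pairCount : ArithmeticFunction ℕ := ζ * totientSqrtPart

theorem isMultiplicative_pairCount : pairCount.IsMultiplicative :=
  isMultiplicative_zeta.mul isMultiplicative_totientSqrtPart

theorem pairCount_apply (N : ℕ) : pairCount N = ∑ d ∈ N.divisors, d.sqrtPart.totient := by
  rw [pairCount, zeta_mul_apply]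
  exact sum_congr rfl fun d hd => totientSqrtPart_apply (Nat.pos_of_mem_divisors hd).ne'

def cuspCount : ArithmeticFunction ℕ :=
  ⟨fun N => ∑ d ∈ N.divisors, (d.gcd (N / d)).totient, by simp⟩

theorem cuspCount_apply (N : ℕ) :
    cuspCount N = ∑ d ∈ N.divisors, (d.gcd (N / d)).totient := rfl

/-- `2 ^ ω(N / h²)` is the number of `d ∣ N` with `gcd(d, N / d) = h`. -/
noncomputable def cuspCountByGcd : ArithmeticFunction ℕ :=
  ⟨fun N => if N = 0 then 0 else
    ∑ h ∈ N.sqrtPart.divisors, h.totient * 2 ^ (N / h ^ 2).primeFactors.card, if_pos rfl⟩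

theorem cuspCountByGcd_apply {N : ℕ} (hN : N ≠ 0) :
    cuspCountByGcd N =
      ∑ h ∈ N.sqrtPart.divisors, h.totient * 2 ^ (N / h ^ 2).primeFactors.card :=
  if_neg hN

theorem isMultiplicative_cuspCount : cuspCount.IsMultiplicative := by
  refine IsMultiplicative.iff_ne_zero.2 ⟨by simp [cuspCount_apply], fun {m n} _ _ hmn => ?_⟩
  simp only [cuspCount_apply]
  refine hmn.sum_divisors_mul_eq_sum_mul_sum fun a ha b hb => ?_
  have ha := Nat.dvd_of_mem_divisors ha
  have hb := Nat.dvd_of_mem_divisors hb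
  rw [← Nat.div_mul_div_comm ha hb,
    Nat.Coprime.gcd_mul_mul (by rwa [Nat.mul_div_cancel' ha, Nat.mul_div_cancel' hb])]
  exact Nat.totient_mul (hmn.of_dvd ((Nat.gcd_dvd_left _ _).trans ha)
    ((Nat.gcd_dvd_left _ _).trans hb))

theorem isMultiplicative_cuspCountByGcd : cuspCountByGcd.IsMultiplicative := by
  refine IsMultiplicative.iff_ne_zero.2
    ⟨by simp [cuspCountByGcd_apply, Nat.sqrtPart], fun {m n} hm hn hmn => ?_⟩
  rw [cuspCountByGcd_apply (mul_ne_zero hm hn), cuspCountByGcd_apply hm, cuspCountByGcd_apply hn,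
    hmn.sqrtPart_mul]
  refine (hmn.of_dvd (Nat.sqrtPart_dvd hm) (Nat.sqrtPart_dvd hn))
    |>.sum_divisors_mul_eq_sum_mul_sum fun a ha b hb => ?_
  have hab : a.Coprime b := hmn.of_dvd ((Nat.dvd_of_mem_divisors ha).trans (Nat.sqrtPart_dvd hm))
    ((Nat.dvd_of_mem_divisors hb).trans (Nat.sqrtPart_dvd hn))
  have ha := (Nat.dvd_sqrtPart_iff hm).1 (Nat.dvd_of_mem_divisors ha)
  have hb := (Nat.dvd_sqrtPart_iff hn).1 (Nat.dvd_of_mem_divisors hb)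
  have hcop := hmn.of_dvd (Nat.div_dvd_of_dvd ha) (Nat.div_dvd_of_dvd hb)
  rw [mul_pow, ← Nat.div_mul_div_comm ha hb,
    Nat.primeFactors_mul (Nat.div_ne_zero_of_dvd hm ha) (Nat.div_ne_zero_of_dvd hn hb),
    card_union_of_disjoint hcop.disjoint_primeFactors, pow_add, Nat.totient_mul hab]
  ring

theorem pairCount_prime_pow {p : ℕ} (hp : p.Prime) (k : ℕ) :
    pairCount (p ^ k) = ∑ j ∈ range (k + 1), (p ^ (j / 2)).totient := by
  rw [pairCount_apply, Nat.divisors_prime_pow hp, sum_map]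
  simp only [Function.Embedding.coeFn_mk, Nat.sqrtPart_prime_pow hp]

theorem cuspCount_prime_pow {p : ℕ} (hp : p.Prime) (k : ℕ) :
    cuspCount (p ^ k) = ∑ j ∈ range (k + 1), (p ^ min j (k - j)).totient := by
  rw [cuspCount_apply, Nat.divisors_prime_pow hp, sum_map]
  refine sum_congr rfl fun j hj => ?_
  rw [Function.Embedding.coeFn_mk, Nat.pow_div (Nat.le_of_lt_succ (mem_range.1 hj)) hp.pos]
  rcases le_total j (k - j) with h | h
  · rw [Nat.gcd_eq_left (pow_dvd_pow p h), min_eq_left h]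
  · rw [Nat.gcd_eq_right (pow_dvd_pow p h), min_eq_right h]

theorem cuspCountByGcd_prime_pow {p : ℕ} (hp : p.Prime) (k : ℕ) :
    cuspCountByGcd (p ^ k) =
      ∑ i ∈ range (k / 2 + 1), (p ^ i).totient * if k = 2 * i then 1 else 2 := by
  rw [cuspCountByGcd_apply (pow_ne_zero k hp.ne_zero), Nat.sqrtPart_prime_pow hp,
    Nat.divisors_prime_pow hp, sum_map]
  refine sum_congr rfl fun i hi => ?_
  have hi := mem_range.1 hi
  rw [Function.Embedding.coeFn_mk, ← pow_mul, Nat.pow_div (by omega) hp.pos]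
  split_ifs with hk
  · simp [show k - i * 2 = 0 by omega]
  · rw [Nat.primeFactors_prime_pow (by omega) hp, card_singleton, pow_one]

theorem pairCount_eq_cuspCountByGcd : pairCount = cuspCountByGcd := by
  refine (IsMultiplicative.eq_iff_eq_on_prime_powers _ isMultiplicative_pairCount _
    isMultiplicative_cuspCountByGcd).2 fun p k hp => ?_
  rw [pairCount_prime_pow hp, cuspCountByGcd_prime_pow hp]
  exact sum_range_comp_of_card_fibre (fun j _ => by omega)
    (fun i hi => card_filter_div_two_eq hi) fun i => (p ^ i).totient

theorem cuspCount_eq_cuspCountByGcd : cuspCount = cuspCountByGcd := by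
  refine (IsMultiplicative.eq_iff_eq_on_prime_powers _ isMultiplicative_cuspCount _
    isMultiplicative_cuspCountByGcd).2 fun p k hp => ?_
  rw [cuspCount_prime_pow hp, cuspCountByGcd_prime_pow hp]
  exact sum_range_comp_of_card_fibre (fun j _ => by omega)
    (fun i hi => card_filter_min_sub_eq hi) fun i => (p ^ i).totient

theorem count_pairs_eq_count_cusps_general
    (n M N : ℕ) (hM : Squarefree M) (hN : N = n ^ 2 * M) :
    (∑ m ∈ N.divisors, Nat.totient (hh N m) =
      ∑ d ∈ N.divisors, Nat.totient (Nat.gcd d (N / d))) ∧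
    (∑ m ∈ N.divisors, Nat.totient (hh N m) =
      ∑ h ∈ n.divisors, Nat.totient h * 2 ^ (N / h ^ 2).primeFactors.card) := by
  rcases eq_or_ne n 0 with rfl | hn
  · simp [hN]
  have hN0 : N ≠ 0 := hN ▸ mul_ne_zero (pow_ne_zero 2 hn) hM.ne_zero
  have hpairs : ∑ m ∈ N.divisors, (hh N m).totient = pairCount N := by
    rw [pairCount_apply, ← Nat.sum_div_divisors N fun d => d.sqrtPart.totient]
    exact sum_congr rfl fun m hm => by rw [hh_eq_sqrtPart hN0 (Nat.dvd_of_mem_divisors hm)]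
  rw [hpairs, pairCount_eq_cuspCountByGcd]
  refine ⟨by rw [← cuspCount_eq_cuspCountByGcd, cuspCount_apply], ?_⟩
  have hsqrt : N.sqrtPart = n := hN ▸ Nat.sqrtPart_sq_mul hn hM
  rw [cuspCountByGcd_apply hN0, hsqrt]

/-- Claim (a) in the proof of Theorem 2: for `N = n²M`, `n ∣ 24`, `M` squarefree, the
number of pairs `(m,k)` with `m ∣ N`, `0 ≤ k ≤ φ(h(m))−1`, equals the number of cusps
of `X₀(N)`, and both equal `∑_{h∣n} φ(h)·2^{ω(N/h²)}`. -/
theorem count_pairs_eq_count_cusps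
    (n M N : ℕ) (hn : n ∣ 24) (hnpos : 0 < n) (hM : Squarefree M) (hMpos : 0 < M)
    (hN : N = n ^ 2 * M) :
    (∑ m ∈ N.divisors, Nat.totient (hh N m) =
      ∑ d ∈ N.divisors, Nat.totient (Nat.gcd d (N / d))) ∧
    (∑ m ∈ N.divisors, Nat.totient (hh N m) =
      ∑ h ∈ n.divisors, Nat.totient h * 2 ^ (N / h ^ 2).primeFactors.card) :=
  count_pairs_eq_count_cusps_general n M N hM hN
end

section
/- Let N = n²M where n is a positive divisor of 24 and M is a squarefree positive integer, and let ℓ be an integer with gcd(ℓ, N) = 1. Let m | N, write h = h(m), and let k be an integer. Let a/c be a cusp of X_0(N) with c | N and gcd(a,c) = 1, and write (mha + kc)/(hc) in reduced form with denominator c' > 0, and (mhℓ'a + ℓ'kc)/(hc) in reduced form with denominator c'' > 0, where ℓ' is an integer with ℓℓ' ≡ 1 (mod N). Then c' = c''; consequently the order of η_{m,k} at the cusp a/c, namely cN/(24·m·(c')²·gcd(c, N/c)), equals the order of η_{m,ℓ'k} at the cusp ℓ'a/c. -/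
/-!
Both reduced denominators are denominators of rationals: `c₁ = q.den` for `q = (mha + kc)/(hc)` and
`c₂ = (ℓ'q).den`. Since `ℓℓ' ≡ 1 (mod N)`, the integer `ℓ'` is prime to `N`, hence to its divisors
`h` and `c`, hence to `q.den ∣ hc`; and multiplying a rational by an integer prime to its
denominator leaves the denominator unchanged.
-/

theorem Rat.den_intCast_mul_of_isCoprime {u : ℤ} {q : ℚ} (hu : IsCoprime u q.den) :
    ((u : ℚ) * q).den = q.den := by
  have hnum : IsCoprime (u * q.num) q.den :=
    hu.mul_left (Int.isCoprime_iff_gcd_eq_one.mpr q.reduced)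
  rw [Rat.mul_den, Rat.den_intCast, Rat.num_intCast, one_mul]
  rw [show (u * q.num).natAbs.gcd q.den = 1 from Int.isCoprime_iff_nat_coprime.mp hnum, Nat.div_one]

theorem Rat.isCoprime_den_div {u H : ℤ} (X : ℤ) (hu : IsCoprime u H) :
    IsCoprime u ((X : ℚ) / H).den := by
  rw [← Rat.divInt_eq_div]
  exact hu.of_isCoprime_of_dvd_right (Rat.den_dvd X H)

theorem hh_dvd {N m : ℕ} (h0 : hh N m ≠ 0) : hh N m ∣ N :=
  (Dvd.intro_left _ (sq (hh N m)).symm).trans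
    ((dvd_mul_left _ m).trans (Nat.findGreatest_of_ne_zero (P := (m * · ^ 2 ∣ N)) rfl h0))

theorem reduced_denominators_eq_general
    (N : ℕ)
    (ℓ ℓ' : ℤ) (hℓℓ' : (N : ℤ) ∣ ℓ * ℓ' - 1)
    (m : ℕ) (k : ℤ)
    (c : ℕ) (hc : c ∣ N) (a : ℤ)
    (a₁ c₁ : ℤ) (hc₁pos : 0 < c₁) (hcop₁ : Int.gcd a₁ c₁ = 1)
    (hred₁ : (a₁ : ℚ) / (c₁ : ℚ) =
      ((m : ℚ) * (hh N m) * a + k * c) / ((hh N m : ℚ) * c))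
    (a₂ c₂ : ℤ) (hc₂pos : 0 < c₂) (hcop₂ : Int.gcd a₂ c₂ = 1)
    (hred₂ : (a₂ : ℚ) / (c₂ : ℚ) =
      ((m : ℚ) * (hh N m) * ℓ' * a + ℓ' * k * c) / ((hh N m : ℚ) * c)) :
    c₁ = c₂ ∧
    (c : ℚ) * N / (24 * m * (c₁ : ℚ) ^ 2 * Nat.gcd c (N / c)) =
      (c : ℚ) * N / (24 * m * (c₂ : ℚ) ^ 2 * Nat.gcd c (N / c)) := by
  set h := hh N m
  obtain ⟨q, hq⟩ : ∃ q : ℚ, q = ((m * h * a + k * c : ℤ) : ℚ) / (h * c : ℤ) := ⟨_, rfl⟩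
  have hq₁ : c₁ = q.den := by
    rw [← Rat.den_div_eq_of_coprime hc₁pos hcop₁, hred₁, hq]
    push_cast; rfl
  have hq₂ : c₂ = ((ℓ' : ℚ) * q).den := by
    rw [← Rat.den_div_eq_of_coprime hc₂pos hcop₂, hred₂, hq]
    push_cast; ring_nf
  obtain ⟨t, ht⟩ := hℓℓ'
  have hℓ'N : IsCoprime ℓ' N := ⟨ℓ, -t, by linarith⟩
  have hcop : IsCoprime ℓ' q.den := by
    rcases eq_or_ne h 0 with h0 | h0
    · -- `h = 0` (e.g. when `m ∤ N`) makes `q = 0` through division by zero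
      simpa [hq, h0] using isCoprime_one_right
    · have hcoprime_of_dvd {d : ℕ} (hd : d ∣ N) : IsCoprime ℓ' d :=
        hℓ'N.of_isCoprime_of_dvd_right (Int.natCast_dvd_natCast.mpr hd)
      exact hq ▸ Rat.isCoprime_den_div _
        ((hcoprime_of_dvd (hh_dvd h0)).mul_right (hcoprime_of_dvd hc))
  have hc₁₂ : c₁ = c₂ := by rw [hq₁, hq₂, Rat.den_intCast_mul_of_isCoprime hcop]
  exact ⟨hc₁₂, by rw [hc₁₂]⟩

/-- Lemma 3.1 (computation): with `N = n²M`, `n ∣ 24`, `M` squarefree, `gcd(ℓ,N) = 1`,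
`ℓℓ' ≡ 1 (mod N)`, `m ∣ N`, `h = h(m)`, and a cusp `a/c` of `X₀(N)` (`c ∣ N`,
`gcd(a,c) = 1`), if `c'` is the reduced denominator of `(mha + kc)/(hc)` and `c''` that of
`(mhℓ'a + ℓ'kc)/(hc)`, then `c' = c''`; consequently the order `cN/(24m(c')²·gcd(c,N/c))`
of `η_{m,k}` at `a/c` equals the order of `η_{m,ℓ'k}` at `ℓ'a/c`. -/
theorem reduced_denominators_eq
    (n M N : ℕ) (hn : n ∣ 24) (hnpos : 0 < n) (hM : Squarefree M) (hMpos : 0 < M)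
    (hN : N = n ^ 2 * M)
    (ℓ ℓ' : ℤ) (hℓ : Int.gcd ℓ (N : ℤ) = 1) (hℓℓ' : (N : ℤ) ∣ ℓ * ℓ' - 1)
    (m : ℕ) (hm : m ∣ N) (k : ℤ)
    (c : ℕ) (hc : c ∣ N) (hcpos : 0 < c) (a : ℤ) (hac : Int.gcd a (c : ℤ) = 1)
    (a₁ c₁ : ℤ) (hc₁pos : 0 < c₁) (hcop₁ : Int.gcd a₁ c₁ = 1)
    (hred₁ : (a₁ : ℚ) / (c₁ : ℚ) =
      ((m : ℚ) * (hh N m) * a + k * c) / ((hh N m : ℚ) * c))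
    (a₂ c₂ : ℤ) (hc₂pos : 0 < c₂) (hcop₂ : Int.gcd a₂ c₂ = 1)
    (hred₂ : (a₂ : ℚ) / (c₂ : ℚ) =
      ((m : ℚ) * (hh N m) * ℓ' * a + ℓ' * k * c) / ((hh N m : ℚ) * c)) :
    c₁ = c₂ ∧
    (c : ℚ) * N / (24 * m * (c₁ : ℚ) ^ 2 * Nat.gcd c (N / c)) =
      (c : ℚ) * N / (24 * m * (c₂ : ℚ) ^ 2 * Nat.gcd c (N / c)) :=
  reduced_denominators_eq_general N ℓ ℓ' hℓℓ' m k c hc a a₁ c₁ hc₁pos hcop₁ hred₁ a₂ c₂ hc₂pos hcop₂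
    hred₂
end
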